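/- For any K×D real matrix A and v uniformly distributed on the unit sphere S^{D−1} ⊂ R^D, E[‖Av‖³] ≤ √3 · ‖A‖_F³ / D^{3/2}. -/

import Mathlib

open MeasureTheory
open scoped BigOperators

lemma cs_integral {α : Type*} [MeasurableSpace α] (μ : Measure α) (f g : α → ℝ)
    (hf2 : Integrable (fun x => f x ^ 2) μ) (hg2 : Integrable (fun x => g x ^ 2) μ)
    (hfg : Integrable (fun x => f x * g x) μ) :
    ∫ x, f x * g x ∂μ ≤ Real.sqrt (∫ x, f x ^ 2 ∂μ) * Real.sqrt (∫ x, g x ^ 2 ∂μ) := by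
  set a := ∫ x, f x ^ 2 ∂μ with ha_def
  set c := ∫ x, g x ^ 2 ∂μ with hc_def
  have ha : 0 ≤ a := integral_nonneg fun x => sq_nonneg _
  have hc : 0 ≤ c := integral_nonneg fun x => sq_nonneg _
  have hzero : ∀ (F G : α → ℝ), Integrable (fun x => F x ^ 2) μ →
      (∫ x, F x ^ 2 ∂μ) = 0 → (fun x => F x * G x) =ᵐ[μ] 0 := by
    intro F G hF h0
    have : (fun x => F x ^ 2) =ᵐ[μ] 0 := by
      have := (integral_eq_zero_iff_of_nonneg
        (fun x => sq_nonneg (F x)) hF).mp h0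
      exact this
    filter_upwards [this] with x hx
    have : F x = 0 := by
      have : F x ^ 2 = 0 := hx
      exact pow_eq_zero_iff (by norm_num) |>.mp this
    simp [this]
  rcases eq_or_lt_of_le ha with h0 | hapos
  · rw [integral_congr_ae (hzero f g hf2 h0.symm)]
    simp [integral_zero]
    positivity
  rcases eq_or_lt_of_le hc with h0 | hcpos
  · have : (fun x => g x * f x) =ᵐ[μ] 0 := hzero g f hg2 h0.symm
    have h2 : (fun x => f x * g x) =ᵐ[μ] 0 := by
      filter_upwards [this] with x hx; rw [mul_comm]; exact hx
    rw [integral_congr_ae h2]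
    simp [integral_zero]
    positivity
  · set s := Real.sqrt c / Real.sqrt a with hs_def
    have hsa : Real.sqrt a > 0 := Real.sqrt_pos.mpr hapos
    have hsc : Real.sqrt c > 0 := Real.sqrt_pos.mpr hcpos
    have hs : 0 < s := div_pos hsc hsa
    have hpt : ∀ x, f x * g x ≤ (s * f x ^ 2 + g x ^ 2 / s) / 2 := by
      intro x
      rw [le_div_iff₀ (by norm_num : (0:ℝ) < 2)]
      have h := sq_nonneg (s * f x - g x)
      have h2 : 0 ≤ (s * f x - g x)^2 / s := div_nonneg h hs.le
      have h3 : (s * f x - g x)^2 / s = s * f x ^2 + g x ^2 / s - 2 * (f x * g x) := by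
        field_simp; ring
      linarith [h3 ▸ h2]
    have hint : Integrable (fun x => (s * f x ^ 2 + g x ^ 2 / s) / 2) μ :=
      ((hf2.const_mul s).add (hg2.div_const s)).div_const 2
    have hle : ∫ x, f x * g x ∂μ ≤ ∫ x, (s * f x ^ 2 + g x ^ 2 / s) / 2 ∂μ :=
      integral_mono hfg hint hpt
    have heq : ∫ x, (s * f x ^ 2 + g x ^ 2 / s) / 2 ∂μ = (s * a + c / s) / 2 := by
      rw [integral_div, integral_add (hf2.const_mul s) (hg2.div_const s),
        integral_const_mul, integral_div]
    have hval : (s * a + c / s) / 2 = Real.sqrt a * Real.sqrt c := by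
      have h1 : Real.sqrt a ^ 2 = a := Real.sq_sqrt ha
      have h2 : Real.sqrt c ^ 2 = c := Real.sq_sqrt hc
      rw [hs_def]
      field_simp
      nlinarith [h1, h2, hsa, hsc]
    linarith [hle, heq ▸ hle]

lemma intg_of_bound {D : ℕ}
    (μ : Measure (EuclideanSpace ℝ (Fin D))) [IsProbabilityMeasure μ]
    (hsphere : ∀ᵐ v ∂μ, ‖v‖ = 1)
    (g : EuclideanSpace ℝ (Fin D) → ℝ) (C : ℝ) (hg : Continuous g)
    (hb : ∀ v, ‖v‖ = 1 → |g v| ≤ C) : Integrable g μ := by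
  refine Integrable.mono' (integrable_const C) hg.aestronglyMeasurable ?_
  filter_upwards [hsphere] with v hv
  simpa using hb v hv

lemma sq_sum_eq {D : ℕ} (v : EuclideanSpace ℝ (Fin D)) :
    ∑ i, (v i) ^ 2 = ‖v‖ ^ 2 := by
  rw [EuclideanSpace.norm_eq, Real.sq_sqrt (by positivity)]
  simp [Real.norm_eq_abs, sq_abs]

lemma abs_coord_le {D : ℕ} (v : EuclideanSpace ℝ (Fin D)) (i : Fin D) :
    |v i| ≤ ‖v‖ := by
  rw [EuclideanSpace.norm_eq, ← Real.sqrt_sq_eq_abs]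
  refine Real.sqrt_le_sqrt ?_
  calc (v i)^2 ≤ ∑ j, (v j)^2 := Finset.single_le_sum (f := fun j => (v j)^2)
        (fun j _ => sq_nonneg _) (Finset.mem_univ i)
  _ = ∑ j, ‖v j‖^2 := by simp [Real.norm_eq_abs, sq_abs]

lemma cont_coord {D : ℕ} (i : Fin D) :
    Continuous (fun v : EuclideanSpace ℝ (Fin D) => v i) := by
  exact (continuous_apply i).comp (PiLp.continuous_ofLp 2 _)

lemma transfer_pow {D : ℕ} [NeZero D]
    (μ : Measure (EuclideanSpace ℝ (Fin D))) [IsProbabilityMeasure μ]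
    (hrot : ∀ O : EuclideanSpace ℝ (Fin D) ≃ₗᵢ[ℝ] EuclideanSpace ℝ (Fin D),
      Measure.map O μ = μ)
    (a : EuclideanSpace ℝ (Fin D)) (n : ℕ) :
    ∫ v, (inner ℝ a v : ℝ) ^ n ∂μ = ‖a‖ ^ n * ∫ v, (v 0) ^ n ∂μ := by
  set b : EuclideanSpace ℝ (Fin D) := ‖a‖ • (EuclideanSpace.single (0 : Fin D) (1:ℝ)) with hb
  have hnorm : ‖a‖ = ‖b‖ := by
    rw [hb, norm_smul, EuclideanSpace.norm_single]
    simp [abs_of_nonneg (norm_nonneg a)]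
  set O := Submodule.reflection (ℝ ∙ (a - b))ᗮ with hO
  have hOa : O a = b := Submodule.reflection_sub hnorm
  have key : ∀ v, (inner ℝ a v : ℝ) = ‖a‖ * (O v 0) := by
    intro v
    calc (inner ℝ a v : ℝ) = inner ℝ (O a) (O v) := (O.inner_map_map a v).symm
    _ = inner ℝ b (O v) := by rw [hOa]
    _ = ‖a‖ * (O v 0) := by
        rw [hb, inner_smul_left]
        simp [EuclideanSpace.inner_single_left]
  have hmeas0 : Measurable (fun w : EuclideanSpace ℝ (Fin D) => (‖a‖ * w 0) ^ n) := by
    fun_prop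
  calc ∫ v, (inner ℝ a v : ℝ) ^ n ∂μ = ∫ v, (‖a‖ * (O v 0)) ^ n ∂μ := by
        simp_rw [key]
  _ = ∫ w, (‖a‖ * w 0) ^ n ∂(Measure.map O μ) := by
        rw [integral_map O.continuous.measurable.aemeasurable
          hmeas0.aestronglyMeasurable]
  _ = ∫ w, (‖a‖ * w 0) ^ n ∂μ := by rw [hrot O]
  _ = ‖a‖ ^ n * ∫ v, (v 0) ^ n ∂μ := by
        simp_rw [mul_pow]
        rw [integral_const_mul]

lemma second_moment {D : ℕ} [NeZero D]
    (μ : Measure (EuclideanSpace ℝ (Fin D))) [IsProbabilityMeasure μ]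
    (hsphere : ∀ᵐ v ∂μ, ‖v‖ = 1)
    (hrot : ∀ O : EuclideanSpace ℝ (Fin D) ≃ₗᵢ[ℝ] EuclideanSpace ℝ (Fin D),
      Measure.map O μ = μ) :
    ∫ v, (v 0) ^ 2 ∂μ = 1 / D := by
  have habs : ∀ v : EuclideanSpace ℝ (Fin D), ‖v‖ = 1 → ∀ i, |v i| ≤ 1 :=
    fun v hv i => hv ▸ abs_coord_le v i
  have hint : ∀ i : Fin D, Integrable (fun v : EuclideanSpace ℝ (Fin D) => (v i)^2) μ := by
    intro i
    refine intg_of_bound μ hsphere _ 1 (by fun_prop) ?_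
    intro v hv
    have hi := habs v hv i
    rw [abs_pow]
    nlinarith [abs_nonneg (v i)]
  have h1 : ∫ v, (∑ i, (v i)^2) ∂μ = 1 := by
    have he : (fun v : EuclideanSpace ℝ (Fin D) => ∑ i, (v i)^2) =ᵐ[μ] fun _ => (1:ℝ) := by
      filter_upwards [hsphere] with v hv
      rw [sq_sum_eq, hv]; norm_num
    rw [integral_congr_ae he]; simp
  rw [integral_finset_sum _ (fun i _ => hint i)] at h1
  have hterm : ∀ i : Fin D, ∫ v, (v i)^2 ∂μ = ∫ v, (v 0)^2 ∂μ := by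
    intro i
    have ht := transfer_pow μ hrot (EuclideanSpace.single i (1:ℝ)) 2
    have hp : ∀ v : EuclideanSpace ℝ (Fin D), (inner ℝ (EuclideanSpace.single i (1:ℝ)) v : ℝ) = v i := by
      intro v; simp [EuclideanSpace.inner_single_left]
    simp_rw [hp] at ht
    rw [ht, EuclideanSpace.norm_single]
    norm_num
  simp_rw [hterm] at h1
  rw [Finset.sum_const, Finset.card_univ, Fintype.card_fin, nsmul_eq_mul] at h1
  have hD : (0:ℝ) < D := by
    have := NeZero.pos D; positivity
  field_simp
  linarith [h1]

lemma fourth_moment {D : ℕ} [NeZero D]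
    (μ : Measure (EuclideanSpace ℝ (Fin D))) [IsProbabilityMeasure μ]
    (hsphere : ∀ᵐ v ∂μ, ‖v‖ = 1)
    (hrot : ∀ O : EuclideanSpace ℝ (Fin D) ≃ₗᵢ[ℝ] EuclideanSpace ℝ (Fin D),
      Measure.map O μ = μ) :
    (D:ℝ)^2 * ∫ v, (v 0) ^ 4 ∂μ ≤ 3 := by
  set m4 := ∫ v, (v 0) ^ 4 ∂μ with hm4_def
  have hm4_nonneg : 0 ≤ m4 := integral_nonneg fun v => by positivity
  have habs : ∀ v : EuclideanSpace ℝ (Fin D), ‖v‖ = 1 → ∀ i, |v i| ≤ 1 :=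
    fun v hv i => hv ▸ abs_coord_le v i
  have hint22 : ∀ i j : Fin D,
      Integrable (fun v : EuclideanSpace ℝ (Fin D) => (v i)^2 * (v j)^2) μ := by
    intro i j
    refine intg_of_bound μ hsphere _ 1 (by fun_prop) ?_
    intro v hv
    have hi := habs v hv i; have hj := habs v hv j
    rw [abs_mul, abs_pow, abs_pow]
    have h1 : |v i|^2 ≤ 1 := by nlinarith [abs_nonneg (v i)]
    have h2 : |v j|^2 ≤ 1 := by nlinarith [abs_nonneg (v j)]
    nlinarith [pow_nonneg (abs_nonneg (v i)) 2, pow_nonneg (abs_nonneg (v j)) 2]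
  have hint4 : ∀ i : Fin D,
      Integrable (fun v : EuclideanSpace ℝ (Fin D) => (v i)^4) μ := by
    intro i
    have := hint22 i i
    simpa [← pow_add] using this
  have hdiag : ∀ i : Fin D, ∫ v, (v i)^4 ∂μ = m4 := by
    intro i
    have ht := transfer_pow μ hrot (EuclideanSpace.single i (1:ℝ)) 4
    have hp : ∀ v : EuclideanSpace ℝ (Fin D),
        (inner ℝ (EuclideanSpace.single i (1:ℝ)) v : ℝ) = v i := by
      intro v; simp [EuclideanSpace.inner_single_left]
    simp_rw [hp] at ht
    rw [ht, EuclideanSpace.norm_single]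
    norm_num
    rfl
  have hoff : ∀ i j : Fin D, i ≠ j → ∫ v, (v i)^2 * (v j)^2 ∂μ = m4 / 3 := by
    intro i j hij
    set a : EuclideanSpace ℝ (Fin D) :=
      EuclideanSpace.single i (1:ℝ) + EuclideanSpace.single j (1:ℝ) with ha
    set a' : EuclideanSpace ℝ (Fin D) :=
      EuclideanSpace.single i (1:ℝ) - EuclideanSpace.single j (1:ℝ) with ha'
    have hij' : j ≠ i := hij.symm
    have hna : ‖a‖^2 = 2 := by
      rw [← real_inner_self_eq_norm_sq, ha, inner_add_left, inner_add_right, inner_add_right]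
      simp [inner_add_left, inner_add_right, EuclideanSpace.inner_single_left,
        EuclideanSpace.single_apply, hij, hij']
      norm_num
    have hna' : ‖a'‖^2 = 2 := by
      rw [← real_inner_self_eq_norm_sq, ha', inner_sub_left, inner_sub_right, inner_sub_right]
      simp [inner_sub_left, inner_sub_right, EuclideanSpace.inner_single_left,
        EuclideanSpace.single_apply, hij, hij']
      norm_num
    have hpa : ∀ v : EuclideanSpace ℝ (Fin D), (inner ℝ a v : ℝ) = v i + v j := by
      intro v; simp [ha, inner_add_left, EuclideanSpace.inner_single_left]
    have hpa' : ∀ v : EuclideanSpace ℝ (Fin D), (inner ℝ a' v : ℝ) = v i - v j := by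
      intro v; simp [ha', inner_sub_left, EuclideanSpace.inner_single_left]
    have h4a : ∫ v, (v i + v j)^4 ∂μ = 4 * m4 := by
      have ht := transfer_pow μ hrot a 4
      simp_rw [hpa] at ht
      rw [ht, show ‖a‖^4 = 4 by nlinarith [hna]]
    have h4a' : ∫ v, (v i - v j)^4 ∂μ = 4 * m4 := by
      have ht := transfer_pow μ hrot a' 4
      simp_rw [hpa'] at ht
      rw [ht, show ‖a'‖^4 = 4 by nlinarith [hna']]
    have hintp : Integrable (fun v : EuclideanSpace ℝ (Fin D) => (v i + v j)^4) μ := by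
      refine intg_of_bound μ hsphere _ 16 (by fun_prop) ?_
      intro v hv
      have hi := habs v hv i; have hj := habs v hv j
      have h2 : |v i + v j| ≤ 2 := by
        calc |v i + v j| ≤ |v i| + |v j| := abs_add_le _ _
        _ ≤ 2 := by linarith
      rw [abs_pow]
      calc |v i + v j|^4 ≤ 2^4 := pow_le_pow_left₀ (abs_nonneg _) h2 4
      _ = 16 := by norm_num
    have hintm : Integrable (fun v : EuclideanSpace ℝ (Fin D) => (v i - v j)^4) μ := by
      refine intg_of_bound μ hsphere _ 16 (by fun_prop) ?_
      intro v hv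
      have hi := habs v hv i; have hj := habs v hv j
      have h2 : |v i - v j| ≤ 2 := by
        calc |v i - v j| ≤ |v i| + |v j| := abs_sub _ _
        _ ≤ 2 := by linarith
      rw [abs_pow]
      calc |v i - v j|^4 ≤ 2^4 := pow_le_pow_left₀ (abs_nonneg _) h2 4
      _ = 16 := by norm_num
    have hsum : ∫ v, ((v i + v j)^4 + (v i - v j)^4) ∂μ = 8 * m4 := by
      rw [integral_add hintp hintm, h4a, h4a']; ring
    have hexp : ∀ v : EuclideanSpace ℝ (Fin D),
        (v i + v j)^4 + (v i - v j)^4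
          = 2*(v i)^4 + (12*((v i)^2*(v j)^2) + 2*(v j)^4) := by
      intro v; ring
    simp_rw [hexp] at hsum
    have hB : Integrable (fun v : EuclideanSpace ℝ (Fin D) =>
        12*((v i)^2*(v j)^2) + 2*((v j)^4)) μ :=
      ((hint22 i j).const_mul 12).add ((hint4 j).const_mul 2)
    rw [integral_add ((hint4 i).const_mul 2) hB,
      integral_add ((hint22 i j).const_mul 12) ((hint4 j).const_mul 2),
      integral_const_mul, integral_const_mul, integral_const_mul,
      hdiag i, hdiag j] at hsum
    linarith
  have h1 : ∫ v, (∑ i, (v i)^2)^2 ∂μ = 1 := by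
    have he : (fun v : EuclideanSpace ℝ (Fin D) => (∑ i, (v i)^2)^2) =ᵐ[μ] fun _ => (1:ℝ) := by
      filter_upwards [hsphere] with v hv
      rw [sq_sum_eq, hv]; norm_num
    rw [integral_congr_ae he]; simp
  have hexp2 : ∀ v : EuclideanSpace ℝ (Fin D),
      (∑ i, (v i)^2)^2 = ∑ i, ∑ j, (v i)^2 * (v j)^2 := by
    intro v
    rw [sq, Finset.sum_mul_sum]
  simp_rw [hexp2] at h1
  rw [integral_finset_sum _ (fun i _ => integrable_finset_sum _ (fun j _ => hint22 i j))] at h1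
  simp_rw [fun i => integral_finset_sum (μ := μ) Finset.univ (fun j _ => hint22 i j)] at h1
  have hval : ∀ i j : Fin D, ∫ v, (v i)^2 * (v j)^2 ∂μ
      = m4/3 + (if j = i then (2/3)*m4 else 0) := by
    intro i j
    by_cases h : j = i
    · subst h
      have : ∫ v, (v j)^2 * (v j)^2 ∂μ = ∫ v, (v j)^4 ∂μ := by
        refine integral_congr_ae (Filter.Eventually.of_forall fun v => by ring)
      rw [this, hdiag j]
      simp; ring
    · rw [hoff i j (fun hh => h hh.symm)]
      simp [h]
  simp_rw [hval, Finset.sum_add_distrib, Finset.sum_const, Finset.sum_ite_eq',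
    Finset.card_univ, Fintype.card_fin, Finset.mem_univ, if_true, nsmul_eq_mul] at h1
  rw [Finset.sum_const, Finset.card_univ, Fintype.card_fin, nsmul_eq_mul] at h1
  have hD1 : (1:ℝ) ≤ D := by
    have := NeZero.pos D
    exact_mod_cast this
  nlinarith [h1, hm4_nonneg, hD1, mul_nonneg (by linarith : (0:ℝ) ≤ (D:ℝ)) hm4_nonneg]

lemma rpow_three_halves {x : ℝ} (hx : 0 ≤ x) : x ^ ((3:ℝ)/2) = x * Real.sqrt x := by
  rcases eq_or_lt_of_le hx with h | h
  · rw [← h, Real.zero_rpow (by norm_num), Real.sqrt_zero, mul_zero]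
  · rw [show (3:ℝ)/2 = 1 + 1/2 by norm_num, Real.rpow_add h, Real.rpow_one,
      Real.sqrt_eq_rpow]

theorem uniform_sphere_third_moment (K D : ℕ) (hD : 1 ≤ D)
    (μ : Measure (EuclideanSpace ℝ (Fin D))) [IsProbabilityMeasure μ]
    (hsphere : ∀ᵐ v ∂μ, ‖v‖ = 1)
    (hrot : ∀ O : EuclideanSpace ℝ (Fin D) ≃ₗᵢ[ℝ] EuclideanSpace ℝ (Fin D),
      Measure.map O μ = μ)
    (A : Matrix (Fin K) (Fin D) ℝ) :
    (∫ v, (∑ k, (A.mulVec (fun i => v i) k) ^ 2) ^ ((3 : ℝ) / 2) ∂μ)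
      ≤ Real.sqrt 3 * (∑ i, ∑ j, (A i j) ^ 2) ^ ((3 : ℝ) / 2)
          / (D : ℝ) ^ ((3 : ℝ) / 2) := by
  haveI : NeZero D := ⟨by omega⟩
  set r : Fin K → EuclideanSpace ℝ (Fin D) :=
    fun k => (WithLp.equiv 2 (Fin D → ℝ)).symm (A k) with hr
  have hrapp : ∀ k j, r k j = A k j := fun k j => rfl
  have hAv : ∀ (v : EuclideanSpace ℝ (Fin D)) k,
      A.mulVec (fun i => v i) k = (inner ℝ (r k) v : ℝ) := by
    intro v k
    simp [Matrix.mulVec, dotProduct, PiLp.inner_apply, hrapp,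
      RCLike.inner_apply, mul_comm]
  set S := ∑ i, ∑ j, (A i j)^2 with hS_def
  have hS_nonneg : 0 ≤ S := by positivity
  have hrnorm : ∀ k, ‖r k‖^2 = ∑ j, (A k j)^2 := by
    intro k
    rw [EuclideanSpace.norm_eq, Real.sq_sqrt (by positivity)]
    simp [Real.norm_eq_abs, sq_abs, hrapp]
  have hSsum : ∑ k, ‖r k‖^2 = S := by
    simp_rw [hrnorm]
    rfl
  set X : EuclideanSpace ℝ (Fin D) → ℝ :=
    fun v => ∑ k, (inner ℝ (r k) v : ℝ)^2 with hX
  have hX_nonneg : ∀ v, 0 ≤ X v := fun v => Finset.sum_nonneg fun k _ => sq_nonneg _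
  have hX_cont : Continuous X :=
    continuous_finset_sum _ fun k _ => ((continuous_const.inner continuous_id)).pow 2
  have hinner_bdd : ∀ (k) (v : EuclideanSpace ℝ (Fin D)), ‖v‖ = 1 →
      |(inner ℝ (r k) v : ℝ)| ≤ ‖r k‖ := by
    intro k v hv
    have := abs_real_inner_le_norm (r k) v
    rw [hv, mul_one] at this
    exact this
  have hX_bdd : ∀ v, ‖v‖ = 1 → X v ≤ S := by
    intro v hv
    rw [← hSsum]
    refine Finset.sum_le_sum fun k _ => ?_
    have h := hinner_bdd k v hv
    calc (inner ℝ (r k) v : ℝ)^2 = |(inner ℝ (r k) v : ℝ)|^2 := (sq_abs _).symm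
    _ ≤ ‖r k‖^2 := by nlinarith [abs_nonneg (inner ℝ (r k) v : ℝ)]
  have m2_eq := second_moment μ hsphere hrot
  have m4_le := fourth_moment μ hsphere hrot
  set m4 := ∫ v, (v 0)^4 ∂μ with hm4_def
  have hm4_nonneg : 0 ≤ m4 := integral_nonneg fun v => by positivity
  have hDpos : (0:ℝ) < D := by exact_mod_cast Nat.pos_of_ne_zero (NeZero.ne D)
  have hint_inner2 : ∀ k, Integrable (fun v => (inner ℝ (r k) v : ℝ)^2) μ := by
    intro k
    refine intg_of_bound μ hsphere _ (‖r k‖^2)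
      ((continuous_const.inner continuous_id).pow 2) ?_
    intro v hv
    have h := hinner_bdd k v hv
    rw [abs_pow]
    nlinarith [abs_nonneg (inner ℝ (r k) v : ℝ)]
  have hint_inner4 : ∀ k, Integrable (fun v => (inner ℝ (r k) v : ℝ)^4) μ := by
    intro k
    refine intg_of_bound μ hsphere _ (‖r k‖^4)
      ((continuous_const.inner continuous_id).pow 4) ?_
    intro v hv
    have h := hinner_bdd k v hv
    rw [abs_pow]
    exact pow_le_pow_left₀ (abs_nonneg _) h 4
  have hint_prod : ∀ k l, Integrable
      (fun v => (inner ℝ (r k) v : ℝ)^2 * (inner ℝ (r l) v : ℝ)^2) μ := by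
    intro k l
    refine intg_of_bound μ hsphere _ (‖r k‖^2 * ‖r l‖^2)
      (((continuous_const.inner continuous_id).pow 2).mul
        ((continuous_const.inner continuous_id).pow 2)) ?_
    intro v hv
    have hk := hinner_bdd k v hv
    have hl := hinner_bdd l v hv
    rw [abs_mul, abs_pow, abs_pow]
    have h1 : |(inner ℝ (r k) v : ℝ)|^2 ≤ ‖r k‖^2 := pow_le_pow_left₀ (abs_nonneg _) hk 2
    have h2 : |(inner ℝ (r l) v : ℝ)|^2 ≤ ‖r l‖^2 := pow_le_pow_left₀ (abs_nonneg _) hl 2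
    exact mul_le_mul h1 h2 (by positivity) (by positivity)
  have hEX : ∫ v, X v ∂μ = S / D := by
    rw [hX, integral_finset_sum _ (fun k _ => hint_inner2 k)]
    have : ∀ k : Fin K, ∫ v, (inner ℝ (r k) v : ℝ)^2 ∂μ = ‖r k‖^2 * (1/D) := by
      intro k
      rw [transfer_pow μ hrot (r k) 2, m2_eq]
    simp_rw [this, ← Finset.sum_mul, hSsum]
    ring
  have hEX_nonneg : 0 ≤ ∫ v, X v ∂μ := integral_nonneg hX_nonneg
  have hrow4 : ∀ k, ∫ v, (inner ℝ (r k) v : ℝ)^4 ∂μ = ‖r k‖^4 * m4 :=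
    fun k => transfer_pow μ hrot (r k) 4
  have hEX2 : ∫ v, (X v)^2 ∂μ ≤ 3 * S^2 / D^2 := by
    have hexp : ∀ v, (X v)^2
        = ∑ k, ∑ l, (inner ℝ (r k) v : ℝ)^2 * (inner ℝ (r l) v : ℝ)^2 := by
      intro v
      rw [hX, sq, Finset.sum_mul_sum]
    have step1 : ∫ v, (X v)^2 ∂μ
        = ∑ k, ∑ l, ∫ v, (inner ℝ (r k) v : ℝ)^2 * (inner ℝ (r l) v : ℝ)^2 ∂μ := by
      simp_rw [hexp]
      rw [integral_finset_sum _
        (fun k _ => integrable_finset_sum _ (fun l _ => hint_prod k l))]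
      exact Finset.sum_congr rfl fun k _ =>
        integral_finset_sum _ (fun l _ => hint_prod k l)
    have hsq4 : ∀ k, (fun v : EuclideanSpace ℝ (Fin D) => ((inner ℝ (r k) v : ℝ)^2)^2)
        = fun v => (inner ℝ (r k) v : ℝ)^4 := by
      intro k; funext v; ring
    have term_le : ∀ k l, ∫ v, (inner ℝ (r k) v : ℝ)^2 * (inner ℝ (r l) v : ℝ)^2 ∂μ
        ≤ ‖r k‖^2 * ‖r l‖^2 * m4 := by
      intro k l
      have hcs := cs_integral μ (fun v => (inner ℝ (r k) v : ℝ)^2)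
        (fun v => (inner ℝ (r l) v : ℝ)^2)
        (by rw [hsq4 k]; exact hint_inner4 k)
        (by rw [hsq4 l]; exact hint_inner4 l)
        (hint_prod k l)
      rw [show (∫ v, ((inner ℝ (r k) v : ℝ)^2)^2 ∂μ) = ‖r k‖^4 * m4 by
            rw [show (fun v => ((inner ℝ (r k) v : ℝ)^2)^2) = fun v => (inner ℝ (r k) v : ℝ)^4
              from hsq4 k]; exact hrow4 k,
          show (∫ v, ((inner ℝ (r l) v : ℝ)^2)^2 ∂μ) = ‖r l‖^4 * m4 by
            rw [show (fun v => ((inner ℝ (r l) v : ℝ)^2)^2) = fun v => (inner ℝ (r l) v : ℝ)^4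
              from hsq4 l]; exact hrow4 l] at hcs
      have hs1 : Real.sqrt (‖r k‖^4 * m4) = ‖r k‖^2 * Real.sqrt m4 := by
        rw [Real.sqrt_mul (by positivity), show ‖r k‖^4 = (‖r k‖^2)^2 by ring,
          Real.sqrt_sq (by positivity)]
      have hs2 : Real.sqrt (‖r l‖^4 * m4) = ‖r l‖^2 * Real.sqrt m4 := by
        rw [Real.sqrt_mul (by positivity), show ‖r l‖^4 = (‖r l‖^2)^2 by ring,
          Real.sqrt_sq (by positivity)]
      rw [hs1, hs2] at hcs
      calc ∫ v, (inner ℝ (r k) v : ℝ)^2 * (inner ℝ (r l) v : ℝ)^2 ∂μ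
          ≤ ‖r k‖^2 * Real.sqrt m4 * (‖r l‖^2 * Real.sqrt m4) := hcs
      _ = ‖r k‖^2 * ‖r l‖^2 * (Real.sqrt m4 * Real.sqrt m4) := by ring
      _ = ‖r k‖^2 * ‖r l‖^2 * m4 := by rw [Real.mul_self_sqrt hm4_nonneg]
    have step2 : ∑ k, ∑ l, (∫ v, (inner ℝ (r k) v : ℝ)^2 * (inner ℝ (r l) v : ℝ)^2 ∂μ)
        ≤ ∑ k, ∑ l, ‖r k‖^2 * ‖r l‖^2 * m4 :=
      Finset.sum_le_sum fun k _ => Finset.sum_le_sum fun l _ => term_le k l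
    have step3 : ∑ k, ∑ l, ‖r k‖^2 * ‖r l‖^2 * m4 = S^2 * m4 := by
      rw [sq, ← hSsum, Finset.sum_mul_sum, Finset.sum_mul]
      exact Finset.sum_congr rfl fun k _ => by rw [Finset.sum_mul]
    have hm4_le : m4 ≤ 3 / D^2 := by
      rw [le_div_iff₀ (by positivity)]
      linarith [m4_le]
    rw [step1]
    calc ∑ k, ∑ l, (∫ v, (inner ℝ (r k) v : ℝ)^2 * (inner ℝ (r l) v : ℝ)^2 ∂μ)
        ≤ S^2 * m4 := step3 ▸ step2
    _ ≤ S^2 * (3 / D^2) := by nlinarith [sq_nonneg S]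
    _ = 3 * S^2 / D^2 := by ring
  have hEX2_nonneg : 0 ≤ ∫ v, (X v)^2 ∂μ := integral_nonneg fun v => sq_nonneg _
  have hXsq_int : Integrable X μ :=
    intg_of_bound μ hsphere X S hX_cont
      (fun v hv => by rw [abs_of_nonneg (hX_nonneg v)]; exact hX_bdd v hv)
  have hX2_int : Integrable (fun v => (X v)^2) μ := by
    refine intg_of_bound μ hsphere _ (S^2) (hX_cont.pow 2) ?_
    intro v hv
    rw [abs_pow]
    rw [abs_of_nonneg (hX_nonneg v)]
    exact pow_le_pow_left₀ (hX_nonneg v) (hX_bdd v hv) 2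
  have hXsqrtX_int : Integrable (fun v => X v * Real.sqrt (X v)) μ := by
    refine intg_of_bound μ hsphere _ (S * Real.sqrt S)
      (hX_cont.mul (Real.continuous_sqrt.comp hX_cont)) ?_
    intro v hv
    rw [abs_of_nonneg (mul_nonneg (hX_nonneg v) (Real.sqrt_nonneg _))]
    exact mul_le_mul (hX_bdd v hv) (Real.sqrt_le_sqrt (hX_bdd v hv))
      (Real.sqrt_nonneg _) hS_nonneg
  have hsqX_eq : (fun v => Real.sqrt (X v) ^ 2) = X := by
    funext v
    exact Real.sq_sqrt (hX_nonneg v)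
  have hmain : ∫ v, X v * Real.sqrt (X v) ∂μ
      ≤ Real.sqrt (∫ v, (X v)^2 ∂μ) * Real.sqrt (∫ v, X v ∂μ) := by
    have := cs_integral μ X (fun v => Real.sqrt (X v)) hX2_int
      (by rw [hsqX_eq]; exact hXsq_int) hXsqrtX_int
    rwa [show (∫ v, Real.sqrt (X v) ^ 2 ∂μ) = ∫ v, X v ∂μ by rw [hsqX_eq]] at this
  have hLHS : (∫ v, (∑ k, (A.mulVec (fun i => v i) k)^2)^((3:ℝ)/2) ∂μ)
      = ∫ v, X v * Real.sqrt (X v) ∂μ := by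
    refine integral_congr_ae (Filter.Eventually.of_forall fun v => ?_)
    have h1 : ∑ k, (A.mulVec (fun i => v i) k)^2 = X v := by
      simp_rw [hAv]
      rfl
    dsimp only
    rw [h1, rpow_three_halves (hX_nonneg v)]
  rw [hLHS]
  have hb1 : Real.sqrt (∫ v, (X v)^2 ∂μ) ≤ Real.sqrt (3 * S^2 / D^2) :=
    Real.sqrt_le_sqrt hEX2
  have hb2 : Real.sqrt (∫ v, X v ∂μ) = Real.sqrt (S / D) := by rw [hEX]
  have hfinal : Real.sqrt (3 * S^2 / D^2) * Real.sqrt (S / D)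
      = Real.sqrt 3 * S^((3:ℝ)/2) / (D:ℝ)^((3:ℝ)/2) := by
    rw [rpow_three_halves hS_nonneg, rpow_three_halves hDpos.le]
    have h1 : Real.sqrt (3 * S^2 / D^2) = Real.sqrt 3 * (S / D) := by
      rw [mul_div_assoc, Real.sqrt_mul (by norm_num : (0:ℝ) ≤ 3),
        show S^2/(D:ℝ)^2 = (S/D)^2 by ring, Real.sqrt_sq (by positivity)]
    have h2 : Real.sqrt (S / D) = Real.sqrt S / Real.sqrt D :=
      Real.sqrt_div hS_nonneg _
    have hsD : 0 < Real.sqrt D := Real.sqrt_pos.mpr hDpos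
    rw [h1, h2]
    field_simp
  calc ∫ v, X v * Real.sqrt (X v) ∂μ
      ≤ Real.sqrt (∫ v, (X v)^2 ∂μ) * Real.sqrt (∫ v, X v ∂μ) := hmain
  _ ≤ Real.sqrt (3 * S^2 / D^2) * Real.sqrt (S / D) := by
      refine mul_le_mul hb1 (le_of_eq hb2) (Real.sqrt_nonneg _) (Real.sqrt_nonneg _)
  _ = Real.sqrt 3 * S^((3:ℝ)/2) / (D:ℝ)^((3:ℝ)/2) := hfinal
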